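/- The family {R_ν}, where R_ν(ρ) = inf_{Λ ∈ O} ‖Λ(ν) − ρ‖₁ and ν ranges over all density matrices, is a complete set of resource monotones: for any density matrices ρ and σ, the conversion ρ → σ is possible by free operations if and only if R_ν(ρ) ≥ R_ν(σ) for every density matrix ν. -/

import Mathlib

open scoped Matrix Kronecker ComplexOrder

noncomputable section

/-- A density matrix: positive semidefinite with unit trace. -/
def IsDensityMatrix {ι : Type*} [Fintype ι] (ρ : Matrix ι ι ℂ) : Prop :=
  ρ.PosSemidef ∧ ρ.trace = 1

/-- The trace norm `‖M‖₁ = Tr √(M† M)`. -/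
noncomputable def traceNorm {ι : Type*} [Fintype ι] [DecidableEq ι]
    (M : Matrix ι ι ℂ) : ℝ :=
  (((Matrix.posSemidef_conjTranspose_mul_self M).isHermitian.eigenvectorUnitary.1 *
      Matrix.diagonal (fun i => ((Real.sqrt
        ((Matrix.posSemidef_conjTranspose_mul_self M).isHermitian.eigenvalues i) : ℝ) : ℂ)) *
      (star (Matrix.posSemidef_conjTranspose_mul_self M).isHermitian.eigenvectorUnitary :
        Matrix ι ι ℂ)).trace).re

/-- The amplification `Λ ⊗ id_k` of a linear map on matrices. -/
def amplify {ι : Type*} [Fintype ι] [DecidableEq ι]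
    (Λ : Matrix ι ι ℂ →ₗ[ℂ] Matrix ι ι ℂ) (k : ℕ)
    (M : Matrix (ι × Fin k) (ι × Fin k) ℂ) : Matrix (ι × Fin k) (ι × Fin k) ℂ :=
  Matrix.of fun p q => Λ (Matrix.of fun i j => M (i, p.2) (j, q.2)) p.1 q.1

/-- A linear map on matrices is CPTP (a quantum channel) if all its amplifications
preserve positive semidefiniteness and it preserves the trace. -/
def IsCPTP {ι : Type*} [Fintype ι] [DecidableEq ι]
    (Λ : Matrix ι ι ℂ →ₗ[ℂ] Matrix ι ι ℂ) : Prop :=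
  (∀ (k : ℕ) (M : Matrix (ι × Fin k) (ι × Fin k) ℂ),
      M.PosSemidef → (amplify Λ k M).PosSemidef) ∧
  (∀ M, (Λ M).trace = M.trace)

/-- A quantum channel on a `d`-dimensional system. -/
structure QChannel (d : ℕ) where
  toFun : Matrix (Fin d) (Fin d) ℂ →ₗ[ℂ] Matrix (Fin d) (Fin d) ℂ
  cptp : IsCPTP toFun

/-- A resource theory: a convex compact set `F` of free states and a set `O` of free
operations containing the identity, closed under composition, preserving `F`, and
containing the state-preparation channel `ρ ↦ Tr(ρ)σ` for every free `σ`. -/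
structure ResourceTheory (d : ℕ) where
  F : Set (Matrix (Fin d) (Fin d) ℂ)
  O : Set (QChannel d)
  F_density : ∀ σ ∈ F, IsDensityMatrix σ
  F_convex : Convex ℝ F
  F_compact : IsCompact F
  id_mem : ∃ Λ ∈ O, ∀ ρ, Λ.toFun ρ = ρ
  comp_mem : ∀ Λ₁ ∈ O, ∀ Λ₂ ∈ O, ∃ Λ ∈ O, ∀ ρ, Λ.toFun ρ = Λ₂.toFun (Λ₁.toFun ρ)
  free_mapsto : ∀ Λ ∈ O, ∀ σ ∈ F, Λ.toFun σ ∈ F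
  prep_mem : ∀ σ ∈ F, ∃ Λ ∈ O, ∀ ρ : Matrix (Fin d) (Fin d) ℂ, Λ.toFun ρ = ρ.trace • σ

/-- `ρ → σ`: for every `ε > 0` some free operation maps `ρ` within trace-distance `ε` of `σ`. -/
def Converts {d : ℕ} (RT : ResourceTheory d) (ρ σ : Matrix (Fin d) (Fin d) ℂ) : Prop :=
  ∀ ε > 0, ∃ Λ ∈ RT.O, traceNorm (Λ.toFun ρ - σ) < ε

/-- A resource monotone: nonnegative on states, nonincreasing under free operations,
vanishing on free states. -/
def IsMonotone {d : ℕ} (RT : ResourceTheory d) (R : Matrix (Fin d) (Fin d) ℂ → ℝ) : Prop :=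
  (∀ ρ, IsDensityMatrix ρ → 0 ≤ R ρ) ∧
  (∀ ρ, IsDensityMatrix ρ → ∀ Λ ∈ RT.O, R (Λ.toFun ρ) ≤ R ρ) ∧
  (∀ σ ∈ RT.F, R σ = 0)

/-- The pure state `|ψ⟩⟨ψ|`. -/
def pureState {ι : Type*} (ψ : ι → ℂ) : Matrix ι ι ℂ :=
  Matrix.vecMulVec ψ (star ψ)

/-- `ψ` is a unit vector. -/
def IsUnitVec {ι : Type*} [Fintype ι] (ψ : ι → ℂ) : Prop :=
  ∑ i, Complex.normSq (ψ i) = 1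

/-- Trace-norm distance from `ρ` to a set of states. -/
noncomputable def distToSet {ι : Type*} [Fintype ι] [DecidableEq ι]
    (F : Set (Matrix ι ι ℂ)) (ρ : Matrix ι ι ℂ) : ℝ :=
  sInf ((fun μ => traceNorm (ρ - μ)) '' F)


/-- The monotone `R_ν(ρ) = inf_{Λ ∈ O} ‖Λ(ν) − ρ‖₁`. -/
noncomputable def Rnu {d : ℕ} (RT : ResourceTheory d)
    (ν ρ : Matrix (Fin d) (Fin d) ℂ) : ℝ :=
  sInf ((fun Λ : QChannel d => traceNorm (Λ.toFun ν - ρ)) '' RT.O)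

/-!
`R_ν(ρ)` is the trace distance from the free orbit of `ν` to `ρ`, so it satisfies the triangle
inequality `R_ν(σ) ≤ R_ν(ρ) + R_ρ(σ)`: compose a free operation bringing `ν` close to `ρ` with one
bringing `ρ` close to `σ`, and use the triangle inequality of the trace norm and its contractivity
under channels. Since `ρ → σ` means exactly `R_ρ(σ) = 0` and `R_ρ(ρ) = 0`, the triangle inequality
gives the forward implication and the monotone `R_ρ` alone gives the converse.

Both trace-norm facts reduce to `‖A - B‖₁ ≤ tr A + tr B` for `A, B ≥ 0`, with equality for the
Jordan decomposition `X = X⁺ - X⁻`.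
-/

open scoped MatrixOrder

lemma Matrix.PosSemidef.trace_mul_nonneg {𝕜 ι : Type*} [RCLike 𝕜] [Fintype ι] [DecidableEq ι]
    {A B : Matrix ι ι 𝕜} (hA : A.PosSemidef) (hB : B.PosSemidef) : 0 ≤ (A * B).trace := by
  have hsa : (CFC.sqrt A)ᴴ = CFC.sqrt A := (Matrix.nonneg_iff_posSemidef.1 (CFC.sqrt_nonneg A)).1
  have hsq : CFC.sqrt A * CFC.sqrt A = A := CFC.sqrt_mul_sqrt_self A hA.nonneg
  have htrace : (A * B).trace = ((CFC.sqrt A)ᴴ * B * CFC.sqrt A).trace := by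
    rw [hsa, mul_assoc, Matrix.trace_mul_comm (CFC.sqrt A), mul_assoc, hsq, Matrix.trace_mul_comm]
  rw [htrace]
  exact (hB.conjTranspose_mul_mul_same _).trace_nonneg

section TraceNorm

variable {ι : Type*} [Fintype ι] [DecidableEq ι]

lemma traceNorm_eq_re_trace_abs (M : Matrix ι ι ℂ) : traceNorm M = (CFC.abs M).trace.re := by
  have h0 : (0 : Matrix ι ι ℂ) ≤ Mᴴ * M := (Matrix.posSemidef_conjTranspose_mul_self M).nonneg
  rw [CFC.abs, Matrix.star_eq_conjTranspose, CFC.sqrt_eq_real_sqrt _ h0, cfcₙ_eq_cfc,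
    (Matrix.posSemidef_conjTranspose_mul_self M).isHermitian.cfc_eq, Matrix.IsHermitian.cfc,
    Unitary.conjStarAlgAut_apply]
  rfl

lemma traceNorm_nonneg (M : Matrix ι ι ℂ) : 0 ≤ traceNorm M := by
  rw [traceNorm_eq_re_trace_abs]
  exact (Complex.nonneg_iff.1 (Matrix.nonneg_iff_posSemidef.1 (CFC.abs_nonneg M)).trace_nonneg).1

lemma traceNorm_le_of_eq_sub {X A B : Matrix ι ι ℂ} (hA : A.PosSemidef) (hB : B.PosSemidef)
    (hX : X = A - B) : traceNorm X ≤ A.trace.re + B.trace.re := by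
  have hXsa : IsSelfAdjoint X := hX ▸ hA.1.sub hB.1
  let sgn : ℝ → ℝ := fun x => if 0 ≤ x then 1 else -1
  have hcont : ContinuousOn sgn (spectrum ℝ X) := Matrix.finite_real_spectrum.continuousOn _
  -- `S = sign X` satisfies `S X = |X|` and `-1 ≤ S ≤ 1`, so `tr |X| = tr (S A) - tr (S B)`.
  set S := cfc sgn X
  have hSX : S * X = CFC.abs X := by
    rw [CFC.abs_eq_cfc_norm X]
    conv_lhs => arg 2; rw [← cfc_id' ℝ X]
    rw [← cfc_mul ..]
    refine cfc_congr fun x _ => ?_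
    by_cases hx : 0 ≤ x <;> simp [sgn, hx, abs_of_nonneg, abs_of_neg, not_le.1]
  have h1 : (1 - S).PosSemidef := by
    rw [← Matrix.nonneg_iff_posSemidef, ← cfc_one ℝ X, ← cfc_sub ..]
    exact cfc_nonneg fun x _ => by by_cases hx : 0 ≤ x <;> simp [sgn, hx]
  have h2 : (1 + S).PosSemidef := by
    rw [← Matrix.nonneg_iff_posSemidef, ← cfc_one ℝ X, ← cfc_add ..]
    exact cfc_nonneg fun x _ => by by_cases hx : 0 ≤ x <;> simp [sgn, hx]
  have htrace : (CFC.abs X).trace =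
      A.trace + B.trace - ((1 - S) * A).trace - ((1 + S) * B).trace := by
    rw [← hSX, hX]
    simp only [Matrix.mul_sub, Matrix.sub_mul, Matrix.add_mul, Matrix.one_mul, Matrix.trace_sub,
      Matrix.trace_add]
    ring
  have hSA := Complex.nonneg_iff.1 (h1.trace_mul_nonneg hA)
  have hSB := Complex.nonneg_iff.1 (h2.trace_mul_nonneg hB)
  rw [traceNorm_eq_re_trace_abs, htrace]
  simp only [Complex.sub_re, Complex.add_re]
  linarith [hSA.1, hSB.1]

lemma traceNorm_eq_re_trace_posPart_add {X : Matrix ι ι ℂ} (hX : X.IsHermitian) :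
    traceNorm X = (X⁺).trace.re + (X⁻).trace.re := by
  rw [traceNorm_eq_re_trace_abs, ← CFC.posPart_add_negPart X hX, Matrix.trace_add, Complex.add_re]

lemma traceNorm_add_le {X Y : Matrix ι ι ℂ} (hX : X.IsHermitian) (hY : Y.IsHermitian) :
    traceNorm (X + Y) ≤ traceNorm X + traceNorm Y := by
  have hdecomp : X + Y = (X⁺ + Y⁺) - (X⁻ + Y⁻) := by
    rw [add_sub_add_comm, CFC.posPart_sub_negPart X hX, CFC.posPart_sub_negPart Y hY]
  calc traceNorm (X + Y) ≤ (X⁺ + Y⁺).trace.re + (X⁻ + Y⁻).trace.re :=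
        traceNorm_le_of_eq_sub
          (Matrix.nonneg_iff_posSemidef.1 <|
            add_nonneg (CFC.posPart_nonneg X) (CFC.posPart_nonneg Y))
          (Matrix.nonneg_iff_posSemidef.1 <|
            add_nonneg (CFC.negPart_nonneg X) (CFC.negPart_nonneg Y))
          hdecomp
    _ = traceNorm X + traceNorm Y := by
        rw [traceNorm_eq_re_trace_posPart_add hX, traceNorm_eq_re_trace_posPart_add hY,
          Matrix.trace_add, Matrix.trace_add, Complex.add_re, Complex.add_re]
        ring

lemma traceNorm_map_le (L : Matrix ι ι ℂ →ₗ[ℂ] Matrix ι ι ℂ)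
    (hpos : ∀ M, M.PosSemidef → (L M).PosSemidef) (htr : ∀ M, (L M).trace = M.trace)
    {X : Matrix ι ι ℂ} (hX : X.IsHermitian) : traceNorm (L X) ≤ traceNorm X := by
  rw [traceNorm_eq_re_trace_posPart_add hX, ← htr X⁺, ← htr X⁻]
  refine traceNorm_le_of_eq_sub (hpos _ ?_) (hpos _ ?_) ?_
  · exact Matrix.nonneg_iff_posSemidef.1 (CFC.posPart_nonneg X)
  · exact Matrix.nonneg_iff_posSemidef.1 (CFC.negPart_nonneg X)
  · rw [← map_sub, CFC.posPart_sub_negPart X hX]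

lemma IsCPTP.posSemidef_map {L : Matrix ι ι ℂ →ₗ[ℂ] Matrix ι ι ℂ} (hL : IsCPTP L)
    {M : Matrix ι ι ℂ} (hM : M.PosSemidef) : (L M).PosSemidef :=
  (hL.1 1 (M.submatrix Prod.fst Prod.fst) (hM.submatrix _)).submatrix fun i => (i, 0)

lemma IsCPTP.traceNorm_map_le {L : Matrix ι ι ℂ →ₗ[ℂ] Matrix ι ι ℂ} (hL : IsCPTP L)
    {X : Matrix ι ι ℂ} (hX : X.IsHermitian) : traceNorm (L X) ≤ traceNorm X :=
  _root_.traceNorm_map_le L (fun _ => hL.posSemidef_map) hL.2 hX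

end TraceNorm

section Rnu

variable {d : ℕ} (RT : ResourceTheory d)

lemma Rnu_nonneg (ν ρ : Matrix (Fin d) (Fin d) ℂ) : 0 ≤ Rnu RT ν ρ :=
  Real.sInf_nonneg (Set.forall_mem_image.2 fun _ _ => traceNorm_nonneg _)

lemma Rnu_le_traceNorm {ν ρ : Matrix (Fin d) (Fin d) ℂ} {Λ : QChannel d} (hΛ : Λ ∈ RT.O) :
    Rnu RT ν ρ ≤ traceNorm (Λ.toFun ν - ρ) :=
  csInf_le ⟨0, Set.forall_mem_image.2 fun _ _ => traceNorm_nonneg _⟩ ⟨Λ, hΛ, rfl⟩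

lemma le_Rnu {ν ρ : Matrix (Fin d) (Fin d) ℂ} {c : ℝ}
    (h : ∀ Λ ∈ RT.O, c ≤ traceNorm (Λ.toFun ν - ρ)) : c ≤ Rnu RT ν ρ := by
  obtain ⟨Λ₀, hΛ₀, -⟩ := RT.id_mem
  exact le_csInf ⟨_, Λ₀, hΛ₀, rfl⟩ (Set.forall_mem_image.2 h)

lemma Rnu_self (ρ : Matrix (Fin d) (Fin d) ℂ) : Rnu RT ρ ρ = 0 := by
  obtain ⟨Λ₀, hΛ₀, hid⟩ := RT.id_mem
  refine le_antisymm ?_ (Rnu_nonneg RT ρ ρ)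
  simpa [hid, traceNorm_eq_re_trace_abs] using Rnu_le_traceNorm RT (ν := ρ) (ρ := ρ) hΛ₀

lemma converts_iff_Rnu_eq_zero (ρ σ : Matrix (Fin d) (Fin d) ℂ) :
    Converts RT ρ σ ↔ Rnu RT ρ σ = 0 := by
  rw [← (Rnu_nonneg RT ρ σ).ge_iff_eq', ← not_lt]
  refine ⟨fun h hpos => ?_, fun h ε hε => ?_⟩
  · obtain ⟨Λ, hΛ, hlt⟩ := h _ hpos
    exact (Rnu_le_traceNorm RT hΛ).not_gt hlt
  · by_contra! hge
    exact h (hε.trans_le (le_Rnu RT hge))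

lemma Rnu_le_Rnu_add_Rnu {ν ρ σ : Matrix (Fin d) (Fin d) ℂ} (hν : ν.PosSemidef)
    (hρ : ρ.PosSemidef) (hσ : σ.IsHermitian) :
    Rnu RT ν σ ≤ Rnu RT ν ρ + Rnu RT ρ σ := by
  rw [← sub_le_iff_le_add']
  refine le_Rnu RT fun Λ' hΛ' => ?_
  rw [sub_le_iff_le_add, ← sub_le_iff_le_add']
  refine le_Rnu RT fun Λ hΛ => ?_
  obtain ⟨Λ'', hΛ'', hcomp⟩ := RT.comp_mem Λ hΛ Λ' hΛ'
  have hΛν := Λ.cptp.posSemidef_map hν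
  have hΛ'Λν := Λ'.cptp.posSemidef_map hΛν
  have hΛ'ρ := Λ'.cptp.posSemidef_map hρ
  have hsplit : Λ''.toFun ν - σ = Λ'.toFun (Λ.toFun ν - ρ) + (Λ'.toFun ρ - σ) := by
    rw [hcomp, map_sub, sub_add_sub_cancel]
  rw [sub_le_iff_le_add]
  calc Rnu RT ν σ ≤ traceNorm (Λ''.toFun ν - σ) := Rnu_le_traceNorm RT hΛ''
    _ ≤ traceNorm (Λ'.toFun (Λ.toFun ν - ρ)) + traceNorm (Λ'.toFun ρ - σ) := by
        rw [hsplit, map_sub]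
        exact traceNorm_add_le (hΛ'Λν.1.sub hΛ'ρ.1) (hΛ'ρ.1.sub hσ)
    _ ≤ traceNorm (Λ.toFun ν - ρ) + traceNorm (Λ'.toFun ρ - σ) := by
        gcongr
        exact Λ'.cptp.traceNorm_map_le (hΛν.1.sub hρ.1)

end Rnu

/-- The family `{R_ν}` is a complete set of resource monotones:
`ρ → σ` if and only if `R_ν(ρ) ≥ R_ν(σ)` for every density matrix `ν`. -/
theorem Rnu_complete_set {d : ℕ} (RT : ResourceTheory d)
    (ρ σ : Matrix (Fin d) (Fin d) ℂ) (hρ : IsDensityMatrix ρ) (hσ : IsDensityMatrix σ) :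
    Converts RT ρ σ ↔
      ∀ ν : Matrix (Fin d) (Fin d) ℂ, IsDensityMatrix ν → Rnu RT ν σ ≤ Rnu RT ν ρ := by
  rw [converts_iff_Rnu_eq_zero]
  refine ⟨fun h ν hν => ?_, fun h => ?_⟩
  · simpa [h] using Rnu_le_Rnu_add_Rnu RT hν.1 hρ.1 hσ.1.1
  · exact le_antisymm (by simpa [Rnu_self] using h ρ hρ) (Rnu_nonneg RT ρ σ)
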